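/- Multiplicative weights regret bound for products of second-order cones: let M^{(0)},...,M^{(T-1)} be vectors in a product of r second-order cones satisfying 0 ⪯ M^{(t)} ⪯ e for all t, and for fixed 0 < δ ≤ 1 define the Gibbs iterates P^{(t)} = e^{δ Σ_{τ<t} M^{(τ)}} / Tr(e^{δ Σ_{τ<t} M^{(τ)}}). Then for any Q ⪰ 0 with Tr(Q) = 1, (1+δ) Σ_{t<T} Tr(M^{(t)} ∘ P^{(t)}) ≥ Σ_{t<T} Tr(M^{(t)} ∘ Q) − log(2r)/δ. -/

import Mathlib

open Real Finset

noncomputable section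

namespace SOC

/-- A vector in `ℝ^{1+d}` split into a scalar part and a vector part. -/
abbrev Vec (d : ℕ) := ℝ × EuclideanSpace ℝ (Fin d)

variable {d : ℕ}

/-- Membership in the second-order (Lorentz) cone: `‖v⃗‖ ≤ v₀`. -/
def inCone (v : Vec d) : Prop := ‖v.2‖ ≤ v.1

/-- Euclidean inner product on `ℝ^{1+d}`. -/
def dotp (v w : Vec d) : ℝ := v.1 * w.1 + ∑ i, v.2 i * w.2 i

/-- Euclidean norm on `ℝ^{1+d}`. -/
def enorm (v : Vec d) : ℝ := Real.sqrt (v.1 ^ 2 + ‖v.2‖ ^ 2)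

/-- The soc norm `|v₀| + ‖v⃗‖`. -/
def socNorm (v : Vec d) : ℝ := |v.1| + ‖v.2‖

/-- Jordan-algebra trace `Tr(v) = 2 v₀`. -/
def jtr (v : Vec d) : ℝ := 2 * v.1

/-- Jordan (circle) product. -/
def jmul (v w : Vec d) : Vec d := (dotp v w, v.1 • w.2 + w.1 • v.2)

/-- The eigenvalue `λ₊ = v₀ + ‖v⃗‖`. -/
def lamP (v : Vec d) : ℝ := v.1 + ‖v.2‖

/-- The eigenvalue `λ₋ = v₀ - ‖v⃗‖`. -/
def lamM (v : Vec d) : ℝ := v.1 - ‖v.2‖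

/-- Jordan frame eigenvector `c₊ = (1/2)(1, v⃗/‖v⃗‖)`. -/
def cP (v : Vec d) : Vec d := (1 / 2, (1 / (2 * ‖v.2‖)) • v.2)

/-- Jordan frame eigenvector `c₋ = (1/2)(1, -v⃗/‖v⃗‖)`. -/
def cM (v : Vec d) : Vec d := (1 / 2, (-(1 / (2 * ‖v.2‖))) • v.2)

/-- Jordan-algebra exponential `e^v = e^{λ₊} c₊ + e^{λ₋} c₋`. -/
def jexp (v : Vec d) : Vec d :=
  ((Real.exp (lamP v) + Real.exp (lamM v)) / 2,
   ((Real.exp (lamP v) - Real.exp (lamM v)) / (2 * ‖v.2‖)) • v.2)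

/-- Jordan-algebra square root `√v = √λ₊ c₊ + √λ₋ c₋`. -/
def jsqrt (v : Vec d) : Vec d :=
  ((Real.sqrt (lamP v) + Real.sqrt (lamM v)) / 2,
   ((Real.sqrt (lamP v) - Real.sqrt (lamM v)) / (2 * ‖v.2‖)) • v.2)

/-- The cone partial order `u ⪯ v`. -/
def cleq (u v : Vec d) : Prop := inCone (v - u)

/-- The identity element `e = (1, 0⃗)`. -/
def idel (d : ℕ) : Vec d := (1, 0)

/-- Arrowhead matrix of `v`. -/
def arw (v : Vec d) : Matrix (Unit ⊕ Fin d) (Unit ⊕ Fin d) ℝ :=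
  Matrix.fromBlocks (Matrix.of fun _ _ => v.1) (Matrix.of fun _ i => v.2 i)
    (Matrix.of fun i _ => v.2 i) (v.1 • 1)

/-- View a pair as a plain vector indexed by `Unit ⊕ Fin d`. -/
def toVec (v : Vec d) : (Unit ⊕ Fin d) → ℝ := Sum.elim (fun _ => v.1) (fun i => v.2 i)

/-- A multicone vector: one Lorentz-cone vector per cone `k`. -/
abbrev MVec {r : ℕ} (n : Fin r → ℕ) := ∀ k, Vec (n k)

variable {r : ℕ} {n : Fin r → ℕ}

/-- Multicone trace. -/
def mtr (v : MVec n) : ℝ := ∑ k, jtr (v k)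

/-- Multicone Jordan exponential (cone-wise). -/
def mjexp (v : MVec n) : MVec n := fun k => jexp (v k)

/-- Multicone Jordan product (cone-wise). -/
def mjmul (v w : MVec n) : MVec n := fun k => jmul (v k) (w k)

/-- Multicone cone membership. -/
def minCone (v : MVec n) : Prop := ∀ k, inCone (v k)

/-- Multicone identity element. -/
def mid (n : Fin r → ℕ) : MVec n := fun k => idel (n k)

end SOC


/-!
The potential `Φ_t = Tr e^{A_t}`, `A_t = δ ∑_{τ<t} M^{(τ)}`, satisfies
`log Φ_{t+1} ≤ log Φ_t + δ(1+δ) Tr(M^{(t)} ∘ P^{(t)})`. This combines the Golden–Thompson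
inequality `Tr e^{a+b} ≤ Tr(e^a ∘ e^b)`, which on a Lorentz cone is a chord bound for the convex
function `c ↦ cosh √(p² + q² + 2c)`, with `e^{δm} ⪯ e + δ(1+δ)m` for `0 ⪯ m ⪯ e`, a scalar
inequality on the eigenvalues of `m`, and self-duality of the cone. Telescoping from `Φ_0 = 2r`
and bounding `δ ∑_t Tr(M^{(t)} ∘ Q) = Tr(A_T ∘ Q) ≤ λ_max(A_T) ≤ log Φ_T` gives the bound.
-/

lemma convexOn_sinh_Ici : ConvexOn ℝ (Set.Ici 0) sinh := by
  refine MonotoneOn.convexOn_of_deriv (convex_Ici 0) continuous_sinh.continuousOn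
    differentiable_sinh.differentiableOn ?_
  rw [interior_Ici, Real.deriv_sinh]
  intro x hx y hy hxy
  rw [cosh_le_cosh, abs_of_pos hx, abs_of_pos hy]
  exact hxy

lemma sinh_div_le_sinh_div {u v : ℝ} (hu : 0 < u) (huv : u ≤ v) : sinh u / u ≤ sinh v / v := by
  simpa using convexOn_sinh_Ici.secant_mono (a := 0) Set.self_mem_Ici hu.le
    (hu.trans_le huv).le hu.ne' (hu.trans_le huv).ne' huv

lemma convexOn_cosh_sqrt : ConvexOn ℝ (Set.Ici 0) fun x => cosh √x := by
  have hderiv (x : ℝ) (hx : 0 < x) : HasDerivAt (fun x => cosh √x) (sinh √x / √x / 2) x := by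
    convert (hasDerivAt_sqrt hx.ne').cosh using 1
    ring
  refine MonotoneOn.convexOn_of_deriv (convex_Ici 0) (by fun_prop) ?_ ?_ <;> rw [interior_Ici]
  · exact fun x hx => (hderiv x hx).differentiableAt.differentiableWithinAt
  · intro x hx y hy hxy
    rw [(hderiv x hx).deriv, (hderiv y hy).deriv]
    gcongr ?_ / 2
    exact sinh_div_le_sinh_div (sqrt_pos.2 hx) (sqrt_le_sqrt hxy)

/-- The chord of the convex function `c ↦ cosh √(p² + q² + 2c)` over `[-pq, pq]`, whose
endpoint values are `cosh (p ∓ q)`. -/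
lemma cosh_sqrt_le_of_abs_le {p q c : ℝ} (hp : 0 < p) (hq : 0 < q) (hc : |c| ≤ p * q) :
    cosh √(p ^ 2 + q ^ 2 + 2 * c) ≤ cosh p * cosh q + sinh p / p * (sinh q / q) * c := by
  have hpq : 0 < p * q := mul_pos hp hq
  obtain ⟨hc₁, hc₂⟩ := abs_le.1 hc
  set a := (p * q - c) / (2 * (p * q)) with ha
  set b := (p * q + c) / (2 * (p * q)) with hb
  have hab : a + b = 1 := by rw [ha, hb]; field_simp; ring
  have hchord := convexOn_cosh_sqrt.2 (sq_nonneg (p - q)) (sq_nonneg (p + q))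
    (div_nonneg (by linarith) (by positivity)) (div_nonneg (by linarith) (by positivity)) hab
  have hmid : a * (p - q) ^ 2 + b * (p + q) ^ 2 = p ^ 2 + q ^ 2 + 2 * c := by
    rw [ha, hb]; field_simp; ring
  simp only [smul_eq_mul] at hchord
  rw [hmid, sqrt_sq_eq_abs, sqrt_sq (by positivity), cosh_abs, cosh_sub, cosh_add] at hchord
  refine hchord.trans_eq ?_
  field_simp
  ring

lemma cosh_norm_add_le {E : Type*} [NormedAddCommGroup E] [InnerProductSpace ℝ E] (x y : E) :
    cosh ‖x + y‖ ≤ cosh ‖x‖ * cosh ‖y‖ + sinh ‖x‖ / ‖x‖ * (sinh ‖y‖ / ‖y‖) * inner ℝ x y := by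
  rcases eq_or_ne x 0 with rfl | hx
  · simp
  rcases eq_or_ne y 0 with rfl | hy
  · simp
  have hnorm : ‖x + y‖ = √(‖x‖ ^ 2 + ‖y‖ ^ 2 + 2 * inner ℝ x y) := by
    rw [add_right_comm, ← norm_add_sq_real, sqrt_sq (norm_nonneg _)]
  rw [hnorm]
  exact cosh_sqrt_le_of_abs_le (norm_pos_iff.2 hx) (norm_pos_iff.2 hy)
    (abs_real_inner_le_norm x y)

lemma exp_mul_le_one_add {δ z : ℝ} (hδ₀ : 0 ≤ δ) (hδ₁ : δ ≤ 1) (hz₀ : 0 ≤ z) (hz₁ : z ≤ 1) :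
    exp (δ * z) ≤ 1 + δ * (1 + δ) * z := by
  have hδz : |δ * z| ≤ 1 := by
    rw [abs_of_nonneg (by positivity)]; nlinarith
  have hquad := (abs_le.1 (abs_exp_sub_one_sub_id_le hδz)).2
  nlinarith [mul_nonneg (mul_nonneg hδ₀ hδ₀) (mul_nonneg hz₀ (sub_nonneg.2 hz₁))]

namespace SOC

variable {d : ℕ}

lemma dotp_eq (v w : Vec d) : dotp v w = v.1 * w.1 + inner ℝ v.2 w.2 := by
  simp [dotp, PiLp.inner_apply, mul_comm]

lemma dotp_comm (v w : Vec d) : dotp v w = dotp w v := by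
  rw [dotp_eq, dotp_eq, real_inner_comm, mul_comm]

lemma dotp_add_left (u v w : Vec d) : dotp (u + v) w = dotp u w + dotp v w := by
  simp only [dotp_eq, Prod.fst_add, Prod.snd_add, inner_add_left]; ring

lemma dotp_sub_left (u v w : Vec d) : dotp (u - v) w = dotp u w - dotp v w := by
  simp only [dotp_eq, Prod.fst_sub, Prod.snd_sub, inner_sub_left]; ring

lemma dotp_smul_left (c : ℝ) (v w : Vec d) : dotp (c • v) w = c * dotp v w := by
  simp only [dotp_eq, Prod.smul_fst, Prod.smul_snd, smul_eq_mul, real_inner_smul_left]; ring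

lemma dotp_smul_right (c : ℝ) (v w : Vec d) : dotp v (c • w) = c * dotp v w := by
  rw [dotp_comm, dotp_smul_left, dotp_comm]

lemma dotp_sum_left {ι : Type*} (s : Finset ι) (f : ι → Vec d) (w : Vec d) :
    dotp (∑ t ∈ s, f t) w = ∑ t ∈ s, dotp (f t) w :=
  map_sum (AddMonoidHom.mk' (dotp · w) fun u v => dotp_add_left u v w) f s

lemma dotp_idel_left (w : Vec d) : dotp (idel d) w = w.1 := by
  simp [dotp_eq, idel]

lemma jtr_jmul (v w : Vec d) : jtr (jmul v w) = 2 * dotp v w := rfl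

lemma dotp_nonneg {v w : Vec d} (hv : inCone v) (hw : inCone w) : 0 ≤ dotp v w := by
  rw [dotp_eq]
  nlinarith [neg_abs_le (inner ℝ v.2 w.2), abs_real_inner_le_norm v.2 w.2,
    mul_le_mul hv hw (norm_nonneg _) ((norm_nonneg _).trans hv)]

lemma dotp_le_dotp_of_cleq {u v w : Vec d} (h : cleq u v) (hw : inCone w) :
    dotp u w ≤ dotp v w := by
  have := dotp_nonneg h hw
  rw [dotp_sub_left] at this
  linarith

lemma dotp_le_lamP_mul {v w : Vec d} (hw : inCone w) : dotp v w ≤ lamP v * w.1 := by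
  rw [dotp_eq, lamP]
  nlinarith [le_abs_self (inner ℝ v.2 w.2), abs_real_inner_le_norm v.2 w.2,
    mul_le_mul_of_nonneg_left hw (norm_nonneg v.2)]

/-- The Jordan spectral function `f(λ₊) c₊ + f(λ₋) c₋`. -/
def spectral (f : ℝ → ℝ) (v : Vec d) : Vec d :=
  ((f (lamP v) + f (lamM v)) / 2, ((f (lamP v) - f (lamM v)) / (2 * ‖v.2‖)) • v.2)

lemma jexp_eq_spectral (v : Vec d) : jexp v = spectral exp v := rfl

lemma spectral_sub (f g : ℝ → ℝ) (v : Vec d) :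
    spectral f v - spectral g v = spectral (f - g) v := by
  ext1
  · simp only [spectral, Prod.fst_sub, Pi.sub_apply]; ring
  · simp only [spectral, Prod.snd_sub, Pi.sub_apply, ← sub_smul]; congr 1; ring

lemma spectral_const_add_mul (a b : ℝ) (v : Vec d) :
    spectral (fun x => a + b * x) v = a • idel d + b • v := by
  rcases eq_or_ne v.2 0 with hv | hv
  · ext1 <;> simp [spectral, idel, lamP, lamM, hv]
  · have hv' : ‖v.2‖ ≠ 0 := norm_ne_zero_iff.2 hv
    ext1
    · simp [spectral, idel, lamP, lamM]; ring
    · simp only [spectral, idel, lamP, lamM, Prod.snd_add, Prod.smul_snd, smul_zero, zero_add]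
      congr 1
      field_simp
      ring

lemma spectral_smul (f : ℝ → ℝ) {c : ℝ} (hc : 0 < c) (v : Vec d) :
    spectral f (c • v) = spectral (fun x => f (c * x)) v := by
  have hnorm : ‖c • v.2‖ = c * ‖v.2‖ := by rw [norm_smul, Real.norm_of_nonneg hc.le]
  have hP : lamP (c • v) = c * lamP v := by
    simp only [lamP, Prod.smul_fst, Prod.smul_snd, hnorm, smul_eq_mul]; ring
  have hM : lamM (c • v) = c * lamM v := by
    simp only [lamM, Prod.smul_fst, Prod.smul_snd, hnorm, smul_eq_mul]; ring
  simp only [spectral, hP, hM, Prod.smul_snd, hnorm, smul_smul]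
  congr 2
  rcases eq_or_ne ‖v.2‖ 0 with hv | hv
  · simp [hv]
  · field_simp

lemma inCone_spectral {f : ℝ → ℝ} {v : Vec d} (hP : 0 ≤ f (lamP v)) (hM : 0 ≤ f (lamM v)) :
    inCone (spectral f v) := by
  have hhalf :
      |f (lamP v) - f (lamM v)| / (2 * ‖v.2‖) * ‖v.2‖ ≤ |f (lamP v) - f (lamM v)| / 2 := by
    rw [div_mul_eq_mul_div, mul_div_mul_comm]
    exact mul_le_of_le_one_right (by positivity) (div_self_le_one _)
  simp only [inCone, spectral]
  rw [norm_smul, Real.norm_eq_abs, abs_div, abs_of_nonneg (by positivity : (0 : ℝ) ≤ 2 * ‖v.2‖)]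
  refine hhalf.trans ?_
  gcongr
  exact abs_sub_le_iff.2 ⟨by linarith, by linarith⟩

lemma spectral_cleq_spectral {f g : ℝ → ℝ} {v : Vec d} (hP : f (lamP v) ≤ g (lamP v))
    (hM : f (lamM v) ≤ g (lamM v)) : cleq (spectral f v) (spectral g v) := by
  rw [cleq, spectral_sub]
  exact inCone_spectral (sub_nonneg.2 hP) (sub_nonneg.2 hM)

lemma inCone_jexp (v : Vec d) : inCone (jexp v) :=
  inCone_spectral (exp_pos _).le (exp_pos _).le

lemma jexp_fst (v : Vec d) : (jexp v).1 = exp v.1 * cosh ‖v.2‖ := by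
  simp only [jexp, lamP, lamM, cosh_eq, exp_add, exp_sub, exp_neg]
  ring

lemma jexp_snd (v : Vec d) : (jexp v).2 = (exp v.1 * (sinh ‖v.2‖ / ‖v.2‖)) • v.2 := by
  simp only [jexp, lamP, lamM, sinh_eq, exp_add, exp_sub, exp_neg]
  congr 1
  ring

lemma jtr_jexp_pos (v : Vec d) : 0 < jtr (jexp v) := by
  rw [jtr, jexp_fst]; positivity

lemma jtr_jexp_add_le (a b : Vec d) : jtr (jexp (a + b)) ≤ jtr (jmul (jexp a) (jexp b)) := by
  calc jtr (jexp (a + b)) = 2 * exp (a.1 + b.1) * cosh ‖a.2 + b.2‖ := by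
        rw [jtr, jexp_fst, Prod.fst_add, Prod.snd_add, mul_assoc]
    _ ≤ 2 * exp (a.1 + b.1) * (cosh ‖a.2‖ * cosh ‖b.2‖ +
          sinh ‖a.2‖ / ‖a.2‖ * (sinh ‖b.2‖ / ‖b.2‖) * inner ℝ a.2 b.2) := by
        gcongr
        exact cosh_norm_add_le a.2 b.2
    _ = jtr (jmul (jexp a) (jexp b)) := by
        rw [jtr_jmul, dotp_eq, jexp_fst, jexp_fst, jexp_snd, jexp_snd, real_inner_smul_left,
          real_inner_smul_right, exp_add]
        ring

lemma jexp_smul_cleq {δ : ℝ} (hδ₀ : 0 < δ) (hδ₁ : δ ≤ 1) {m : Vec d} (hm₀ : inCone m)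
    (hm₁ : inCone (idel d - m)) : cleq (jexp (δ • m)) (idel d + (δ * (1 + δ)) • m) := by
  have hM : 0 ≤ lamM m := sub_nonneg.2 hm₀
  have hP : lamP m ≤ 1 := by
    have : ‖m.2‖ ≤ 1 - m.1 := by simpa [inCone, idel] using hm₁
    rw [lamP]; linarith
  have hMP : lamM m ≤ lamP m := by rw [lamM, lamP]; linarith [norm_nonneg m.2]
  rw [jexp_eq_spectral, spectral_smul _ hδ₀, ← one_smul ℝ (idel d), ← spectral_const_add_mul]
  exact spectral_cleq_spectral (exp_mul_le_one_add hδ₀.le hδ₁ (hM.trans hMP) hP)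
    (exp_mul_le_one_add hδ₀.le hδ₁ hM (hMP.trans hP))

lemma jtr_jexp_add_smul_le {δ : ℝ} (hδ₀ : 0 < δ) (hδ₁ : δ ≤ 1) (a : Vec d) {m : Vec d}
    (hm₀ : inCone m) (hm₁ : inCone (idel d - m)) :
    jtr (jexp (a + δ • m)) ≤ jtr (jexp a) + δ * (1 + δ) * jtr (jmul m (jexp a)) := by
  have hmono := dotp_le_dotp_of_cleq (jexp_smul_cleq hδ₀ hδ₁ hm₀ hm₁) (inCone_jexp a)
  rw [dotp_add_left, dotp_idel_left, dotp_smul_left] at hmono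
  calc jtr (jexp (a + δ • m)) ≤ jtr (jmul (jexp a) (jexp (δ • m))) := jtr_jexp_add_le a _
    _ = 2 * dotp (jexp (δ • m)) (jexp a) := by rw [jtr_jmul, dotp_comm]
    _ ≤ jtr (jexp a) + δ * (1 + δ) * jtr (jmul m (jexp a)) := by
        rw [jtr, jtr_jmul]; linarith

variable {r : ℕ} {n : Fin r → ℕ}

lemma mtr_mjmul (v w : MVec n) : mtr (mjmul v w) = ∑ k, 2 * dotp (v k) (w k) := rfl

lemma mtr_mjmul_smul_left (c : ℝ) (v w : MVec n) :
    mtr (mjmul (c • v) w) = c * mtr (mjmul v w) := by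
  simp only [mtr_mjmul, Pi.smul_apply, dotp_smul_left, mul_sum]
  exact sum_congr rfl fun k _ => by ring

lemma mtr_mjmul_smul_right (c : ℝ) (v w : MVec n) :
    mtr (mjmul v (c • w)) = c * mtr (mjmul v w) := by
  simp only [mtr_mjmul, Pi.smul_apply, dotp_smul_right, mul_sum]
  exact sum_congr rfl fun k _ => by ring

lemma mtr_mjmul_sum_left {ι : Type*} (s : Finset ι) (f : ι → MVec n) (w : MVec n) :
    mtr (mjmul (∑ t ∈ s, f t) w) = ∑ t ∈ s, mtr (mjmul (f t) w) := by
  simp only [mtr_mjmul, Finset.sum_apply, dotp_sum_left, mul_sum]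
  exact sum_comm

lemma mtr_mjexp_zero : mtr (mjexp (0 : MVec n)) = 2 * r := by
  simp [mtr, mjexp, jtr, jexp_fst, mul_comm]

lemma mtr_mjexp_pos [Nonempty (Fin r)] (v : MVec n) : 0 < mtr (mjexp v) :=
  sum_pos (fun k _ => jtr_jexp_pos (v k)) univ_nonempty

lemma mtr_mjexp_add_smul_le {δ : ℝ} (hδ₀ : 0 < δ) (hδ₁ : δ ≤ 1) (A : MVec n) {m : MVec n}
    (hm₀ : minCone m) (hm₁ : minCone (mid n - m)) :
    mtr (mjexp (A + δ • m)) ≤ mtr (mjexp A) + δ * (1 + δ) * mtr (mjmul m (mjexp A)) := by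
  rw [mtr, mtr, mtr, mul_sum, ← sum_add_distrib]
  exact sum_le_sum fun k _ => jtr_jexp_add_smul_le hδ₀ hδ₁ (A k) (hm₀ k) (hm₁ k)

lemma log_mtr_mjexp_add_smul_le [Nonempty (Fin r)] {δ : ℝ} (hδ₀ : 0 < δ) (hδ₁ : δ ≤ 1)
    (A : MVec n) {m : MVec n} (hm₀ : minCone m) (hm₁ : minCone (mid n - m)) :
    log (mtr (mjexp (A + δ • m))) ≤
      log (mtr (mjexp A)) + δ * (1 + δ) * mtr (mjmul m ((mtr (mjexp A))⁻¹ • mjexp A)) := by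
  set Z := mtr (mjexp A)
  set x := δ * (1 + δ) * mtr (mjmul m (Z⁻¹ • mjexp A))
  have hZ : 0 < Z := mtr_mjexp_pos A
  have hbound : mtr (mjexp (A + δ • m)) ≤ Z * exp x := by
    calc mtr (mjexp (A + δ • m)) ≤ Z + δ * (1 + δ) * mtr (mjmul m (mjexp A)) :=
          mtr_mjexp_add_smul_le hδ₀ hδ₁ A hm₀ hm₁
      _ = Z * (x + 1) := by
          simp only [x, mtr_mjmul_smul_right]; field_simp; ring
      _ ≤ Z * exp x := by gcongr; exact add_one_le_exp x
  calc log (mtr (mjexp (A + δ • m))) ≤ log (Z * exp x) := log_le_log (mtr_mjexp_pos _) hbound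
    _ = log Z + x := by rw [log_mul hZ.ne' (exp_pos x).ne', log_exp]

lemma lamP_le_log_mtr_mjexp (v : MVec n) (k : Fin r) : lamP (v k) ≤ log (mtr (mjexp v)) := by
  have hk : exp (lamP (v k)) ≤ jtr (jexp (v k)) := by
    rw [jtr, jexp]; linarith [exp_pos (lamM (v k))]
  have : Nonempty (Fin r) := ⟨k⟩
  rw [le_log_iff_exp_le (mtr_mjexp_pos v)]
  exact hk.trans (single_le_sum (f := fun j => jtr (mjexp v j))
    (fun j _ => (jtr_jexp_pos (v j)).le) (mem_univ k))

lemma mtr_mjmul_le_log_mtr_mjexp (v : MVec n) {Q : MVec n} (hQ : minCone Q) (hQtr : mtr Q = 1) :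
    mtr (mjmul v Q) ≤ log (mtr (mjexp v)) := by
  calc mtr (mjmul v Q) ≤ ∑ k, log (mtr (mjexp v)) * jtr (Q k) := by
        refine sum_le_sum fun k _ => ?_
        have hQk : 0 ≤ (Q k).1 := (norm_nonneg _).trans (hQ k)
        have := dotp_le_lamP_mul (v := v k) (hQ k)
        change 2 * dotp (v k) (Q k) ≤ _
        rw [jtr]
        nlinarith [lamP_le_log_mtr_mjexp v k]
    _ = log (mtr (mjexp v)) := by rw [← mul_sum, ← mtr, hQtr, mul_one]

end SOC

open SOC

theorem mw_regret_bound_general {r : ℕ} {n : Fin r → ℕ} (T : ℕ) (δ : ℝ)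
    (hδ0 : 0 < δ) (hδ1 : δ ≤ 1) (M : ℕ → SOC.MVec n)
    (hM0 : ∀ t < T, SOC.minCone (M t))
    (hMe : ∀ t < T, SOC.minCone (SOC.mid n - M t))
    (Q : SOC.MVec n) (hQ : SOC.minCone Q) (hQtr : SOC.mtr Q = 1)
    (P : ℕ → SOC.MVec n)
    (hP : ∀ t, P t = (SOC.mtr (SOC.mjexp (δ • ∑ τ ∈ Finset.range t, M τ)))⁻¹ •
      SOC.mjexp (δ • ∑ τ ∈ Finset.range t, M τ)) :
    (1 + δ) * ∑ t ∈ Finset.range T, SOC.mtr (SOC.mjmul (M t) (P t)) ≥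
      (∑ t ∈ Finset.range T, SOC.mtr (SOC.mjmul (M t) Q)) - Real.log (2 * r) / δ := by
  have : Nonempty (Fin r) := by
    by_contra hempty
    simp [mtr, not_nonempty_iff.1 hempty] at hQtr
  set ψ : ℕ → ℝ := fun t => log (mtr (mjexp (δ • ∑ τ ∈ range t, M τ)))
  have hstep : ∀ t ∈ range T, ψ (t + 1) - ψ t ≤ δ * (1 + δ) * mtr (mjmul (M t) (P t)) := by
    intro t ht
    have := log_mtr_mjexp_add_smul_le hδ0 hδ1 (δ • ∑ τ ∈ range t, M τ)
      (hM0 t (mem_range.1 ht)) (hMe t (mem_range.1 ht))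
    rw [← smul_add, ← sum_range_succ, ← hP] at this
    simp only [ψ]; linarith
  have hψ0 : ψ 0 = log (2 * r) := by simp [ψ, mtr_mjexp_zero]
  have hψT : δ * ∑ t ∈ range T, mtr (mjmul (M t) Q) ≤ ψ T := by
    rw [← mtr_mjmul_sum_left, ← mtr_mjmul_smul_left]
    exact mtr_mjmul_le_log_mtr_mjexp _ hQ hQtr
  have htelescope : ψ T - ψ 0 ≤ δ * ((1 + δ) * ∑ t ∈ range T, mtr (mjmul (M t) (P t))) := by
    rw [← sum_range_sub, mul_sum, mul_sum]
    exact sum_le_sum fun t ht => (hstep t ht).trans_eq (by ring)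
  rw [ge_iff_le, sub_le_iff_le_add, ← mul_le_mul_iff_of_pos_left hδ0, mul_add,
    mul_div_cancel₀ _ hδ0.ne']
  linarith

/-- Multiplicative weights regret bound over a product of `r`
second-order cones. -/
theorem mw_regret_bound {r : ℕ} (hr : 0 < r) {n : Fin r → ℕ} (T : ℕ) (δ : ℝ)
    (hδ0 : 0 < δ) (hδ1 : δ ≤ 1) (M : ℕ → SOC.MVec n)
    (hM0 : ∀ t < T, SOC.minCone (M t))
    (hMe : ∀ t < T, SOC.minCone (SOC.mid n - M t))
    (Q : SOC.MVec n) (hQ : SOC.minCone Q) (hQtr : SOC.mtr Q = 1)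
    (P : ℕ → SOC.MVec n)
    (hP : ∀ t, P t = (SOC.mtr (SOC.mjexp (δ • ∑ τ ∈ Finset.range t, M τ)))⁻¹ •
      SOC.mjexp (δ • ∑ τ ∈ Finset.range t, M τ)) :
    (1 + δ) * ∑ t ∈ Finset.range T, SOC.mtr (SOC.mjmul (M t) (P t)) ≥
      (∑ t ∈ Finset.range T, SOC.mtr (SOC.mjmul (M t) Q)) - Real.log (2 * r) / δ :=
  mw_regret_bound_general T δ hδ0 hδ1 M hM0 hMe Q hQ hQtr P hP
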